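/- arXiv:2006.08946 — 2 statements merged into one kernel-verified Lean document; each statement's English description precedes it below -/
import Mathlib

section
/- Let h : ℝ → ℝ satisfy h(0) = 0 and suppose G(x,y) = h(x+y) − h(x) − h(y) defines a continuous function on ℝ². Let p, n be positive integers with gcd(p,n) = 1 and p/n ∈ (0, 1/2). Then |h(p/n)| ≤ 2p·|h(1)|/n + 2·ω(G; p/n; [0,1]²). -/
/-- Modulus of continuity of `F : ℝ² → ℝ` on `Ω` with increment `δ`
(Euclidean distance on `ℝ²`). -/
noncomputable def omega2 (F : ℝ × ℝ → ℝ) (δ : ℝ) (Ω : Set (ℝ × ℝ)) : ℝ :=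
  sSup {d : ℝ | ∃ p ∈ Ω, ∃ q ∈ Ω,
    Real.sqrt ((p.1 - q.1) ^ 2 + (p.2 - q.2) ^ 2) ≤ δ ∧ d = |F p - F q|}

/-!
With `x = 1/n`, telescoping the double differences along the two arithmetic progressions
`j/n ↦ j/n + 1` (`j < p`) and `j/n ↦ j/n + p/n` (`j < n`) gives the exact identity
`n h(p/n) = p h(1) + ∑_{j<p} G(j/n, 1) - ∑_{j<n} G(j/n, p/n)`.
Since `G` vanishes on the axes, `G(j/n, 1) = G(j/n, 1) - G(0, 1)` with `j/n ≤ p/n` and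
`G(j/n, p/n) = G(j/n, p/n) - G(j/n, 0)`, so every term is at most `ω(G; p/n; [0,1]²)`,
and dividing by `n` (using `p ≤ n`) gives the bound.
-/

open Finset

lemma sum_range_sub_shift_comm {M : Type*} [AddCommGroup M] (f : ℕ → M) (m n : ℕ) :
    ∑ j ∈ range m, (f (j + n) - f j) = ∑ j ∈ range n, (f (j + m) - f j) := by
  have hsplit : ∑ j ∈ range n, f j + ∑ j ∈ range m, f (n + j)
      = ∑ j ∈ range m, f j + ∑ j ∈ range n, f (m + j) := by
    rw [← sum_range_add, ← sum_range_add, Nat.add_comm]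
  simp only [sum_sub_distrib, Nat.add_comm _ n, Nat.add_comm _ m]
  rw [sub_eq_sub_iff_add_eq_add, add_comm, hsplit, add_comm]

section DoubleDiff

variable {A B : Type*} [AddCommGroup A] [AddCommGroup B] (h : A → B)

def doubleDiff (q : A × A) : B := h (q.1 + q.2) - h q.1 - h q.2

variable {h}

lemma doubleDiff_zero_left (h0 : h 0 = 0) (y : A) : doubleDiff h (0, y) = 0 := by
  simp [doubleDiff, h0]

lemma doubleDiff_zero_right (h0 : h 0 = 0) (x : A) : doubleDiff h (x, 0) = 0 := by
  simp [doubleDiff, h0]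

variable (h)

lemma nsmul_map_nsmul_eq_sum_doubleDiff (x : A) (p n : ℕ) :
    n • h (p • x) = p • h (n • x) + ∑ j ∈ range p, doubleDiff h (j • x, n • x)
      - ∑ j ∈ range n, doubleDiff h (j • x, p • x) := by
  have hshift := sum_range_sub_shift_comm (fun j => h (j • x)) p n
  simp only [doubleDiff, ← add_nsmul, sum_sub_distrib, sum_const, card_range] at hshift ⊢
  rw [hshift]
  abel

end DoubleDiff

section ModulusOfContinuity

variable {F : ℝ × ℝ → ℝ} {δ : ℝ} {Ω : Set (ℝ × ℝ)}

lemma abs_sub_le_omega2 (hΩ : IsCompact Ω) (hF : ContinuousOn F Ω) {a b : ℝ × ℝ}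
    (ha : a ∈ Ω) (hb : b ∈ Ω) (hab : Real.sqrt ((a.1 - b.1) ^ 2 + (a.2 - b.2) ^ 2) ≤ δ) :
    |F a - F b| ≤ omega2 F δ Ω := by
  obtain ⟨M, hM⟩ := hΩ.exists_bound_of_continuousOn hF
  refine le_csSup ⟨2 * M, ?_⟩ ⟨a, ha, b, hb, hab, rfl⟩
  rintro d ⟨a, ha, b, hb, -, rfl⟩
  have hMa := hM a ha
  have hMb := hM b hb
  rw [Real.norm_eq_abs] at hMa hMb
  linarith [abs_sub (F a) (F b)]

lemma abs_sub_le_omega2_of_fst_eq (hΩ : IsCompact Ω) (hF : ContinuousOn F Ω) {x y y' : ℝ}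
    (hy : (x, y) ∈ Ω) (hy' : (x, y') ∈ Ω) (hyy' : |y - y'| ≤ δ) :
    |F (x, y) - F (x, y')| ≤ omega2 F δ Ω :=
  abs_sub_le_omega2 hΩ hF hy hy' (by simpa [Real.sqrt_sq_eq_abs] using hyy')

lemma abs_sub_le_omega2_of_snd_eq (hΩ : IsCompact Ω) (hF : ContinuousOn F Ω) {x x' y : ℝ}
    (hx : (x, y) ∈ Ω) (hx' : (x', y) ∈ Ω) (hxx' : |x - x'| ≤ δ) :
    |F (x, y) - F (x', y)| ≤ omega2 F δ Ω :=
  abs_sub_le_omega2 hΩ hF hx hx' (by simpa [Real.sqrt_sq_eq_abs] using hxx')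

lemma omega2_nonneg (hΩ : IsCompact Ω) (hF : ContinuousOn F Ω) (hne : Ω.Nonempty)
    (hδ : 0 ≤ δ) : 0 ≤ omega2 F δ Ω := by
  obtain ⟨a, ha⟩ := hne
  simpa using abs_sub_le_omega2 (F := F) hΩ hF ha ha (by simpa using hδ)

end ModulusOfContinuity

lemma abs_sum_le_card_mul {ι : Type*} (s : Finset ι) (f : ι → ℝ) {c : ℝ}
    (hf : ∀ i ∈ s, |f i| ≤ c) : |∑ i ∈ s, f i| ≤ #s * c := by
  calc |∑ i ∈ s, f i| ≤ ∑ i ∈ s, |f i| := abs_sum_le_sum_abs f s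
    _ ≤ #s • c := sum_le_card_nsmul s _ c hf
    _ = #s * c := nsmul_eq_mul _ _

lemma natCast_div_mem_Icc {j n : ℕ} (hj : j ≤ n) : (j : ℝ) / n ∈ Set.Icc (0 : ℝ) 1 :=
  ⟨by positivity, div_le_one_of_le₀ (by exact_mod_cast hj) n.cast_nonneg⟩

section UnitSquare

variable {h : ℝ → ℝ} {x y δ : ℝ}

lemma abs_doubleDiff_le_omega2_of_fst_le (h0 : h 0 = 0)
    (hG : ContinuousOn (doubleDiff h) (Set.Icc 0 1 ×ˢ Set.Icc 0 1))
    (hx : x ∈ Set.Icc (0 : ℝ) 1) (hy : y ∈ Set.Icc (0 : ℝ) 1) (hxδ : x ≤ δ) :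
    |doubleDiff h (x, y)| ≤ omega2 (doubleDiff h) δ (Set.Icc 0 1 ×ˢ Set.Icc 0 1) := by
  simpa [doubleDiff_zero_left h0] using
    abs_sub_le_omega2_of_snd_eq (isCompact_Icc.prod isCompact_Icc) hG (Set.mk_mem_prod hx hy)
      (Set.mk_mem_prod unitInterval.zero_mem hy) (by rwa [sub_zero, abs_of_nonneg hx.1])

lemma abs_doubleDiff_le_omega2_of_snd_le (h0 : h 0 = 0)
    (hG : ContinuousOn (doubleDiff h) (Set.Icc 0 1 ×ˢ Set.Icc 0 1))
    (hx : x ∈ Set.Icc (0 : ℝ) 1) (hy : y ∈ Set.Icc (0 : ℝ) 1) (hyδ : y ≤ δ) :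
    |doubleDiff h (x, y)| ≤ omega2 (doubleDiff h) δ (Set.Icc 0 1 ×ˢ Set.Icc 0 1) := by
  simpa [doubleDiff_zero_right h0] using
    abs_sub_le_omega2_of_fst_eq (isCompact_Icc.prod isCompact_Icc) hG (Set.mk_mem_prod hx hy)
      (Set.mk_mem_prod hx unitInterval.zero_mem) (by rwa [sub_zero, abs_of_nonneg hy.1])

end UnitSquare

lemma natCast_mul_abs_apply_div_le {h : ℝ → ℝ} (h0 : h 0 = 0)
    (hG : ContinuousOn (doubleDiff h) (Set.Icc 0 1 ×ˢ Set.Icc 0 1)) {p n : ℕ} (hn : 0 < n)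
    (hpn : p ≤ n) :
    n * |h (p / n)| ≤ p * |h 1|
      + (p + n) * omega2 (doubleDiff h) ((p : ℝ) / n) (Set.Icc 0 1 ×ˢ Set.Icc 0 1) := by
  set ω := omega2 (doubleDiff h) ((p : ℝ) / n) (Set.Icc 0 1 ×ˢ Set.Icc 0 1)
  have hn' : (0 : ℝ) < n := by exact_mod_cast hn
  have hδ := natCast_div_mem_Icc hpn
  have hsum₁ : |∑ j ∈ range p, doubleDiff h ((j : ℝ) / n, 1)| ≤ p * ω := by
    refine (abs_sum_le_card_mul _ _ fun j hj => ?_).trans_eq (by rw [card_range])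
    rw [mem_range] at hj
    exact abs_doubleDiff_le_omega2_of_fst_le h0 hG (natCast_div_mem_Icc (by omega))
      unitInterval.one_mem (by gcongr)
  have hsum₂ : |∑ j ∈ range n, doubleDiff h ((j : ℝ) / n, p / n)| ≤ n * ω := by
    refine (abs_sum_le_card_mul _ _ fun j hj => ?_).trans_eq (by rw [card_range])
    rw [mem_range] at hj
    exact abs_doubleDiff_le_omega2_of_snd_le h0 hG (natCast_div_mem_Icc hj.le) hδ le_rfl
  have hid := nsmul_map_nsmul_eq_sum_doubleDiff h (n : ℝ)⁻¹ p n
  simp only [nsmul_eq_mul, mul_inv_cancel₀ hn'.ne', ← div_eq_mul_inv] at hid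
  calc (n : ℝ) * |h (p / n)| = |n * h (p / n)| := by rw [abs_mul, abs_of_pos hn']
    _ ≤ |p * h 1| + |∑ j ∈ range p, doubleDiff h ((j : ℝ) / n, 1)|
        + |∑ j ∈ range n, doubleDiff h ((j : ℝ) / n, p / n)| := by
      rw [hid]
      exact (abs_sub _ _).trans (by gcongr; exact abs_add_le _ _)
    _ ≤ p * |h 1| + (p + n) * ω := by
      rw [abs_mul, Nat.abs_cast, add_mul, ← add_assoc]
      gcongr

theorem stmt_6_general (h : ℝ → ℝ) (h0 : h 0 = 0)
    (hG : Continuous (fun q : ℝ × ℝ => h (q.1 + q.2) - h q.1 - h q.2))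
    (p n : ℕ) (hn : 0 < n)
    (hlt : (p : ℝ) / n < 1 / 2) :
    |h ((p : ℝ) / n)| ≤ 2 * (p : ℝ) * |h 1| / (n : ℝ)
      + 2 * omega2 (fun q : ℝ × ℝ => h (q.1 + q.2) - h q.1 - h q.2) ((p : ℝ) / n)
          (Set.Icc (0 : ℝ) 1 ×ˢ Set.Icc (0 : ℝ) 1) := by
  change |h _| ≤ _ + 2 * omega2 (doubleDiff h) _ _
  have hn' : (0 : ℝ) < n := by exact_mod_cast hn
  have hpn : p ≤ n := by
    have := (div_lt_iff₀ hn').1 hlt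
    exact_mod_cast (by linarith : (p : ℝ) ≤ n)
  have hGΩ : ContinuousOn (doubleDiff h) (Set.Icc 0 1 ×ˢ Set.Icc 0 1) := hG.continuousOn
  have hmain := natCast_mul_abs_apply_div_le h0 hGΩ hn hpn
  have hω := omega2_nonneg (isCompact_Icc.prod isCompact_Icc) hGΩ
    ⟨(0, 0), Set.mk_mem_prod unitInterval.zero_mem unitInterval.zero_mem⟩
    (natCast_div_mem_Icc hpn).1
  have hpω := mul_le_mul_of_nonneg_right (Nat.cast_le.2 hpn : (p : ℝ) ≤ n) hω
  rw [div_add' _ _ _ hn'.ne', le_div_iff₀ hn']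
  linarith [mul_nonneg p.cast_nonneg (abs_nonneg (h 1))]

/-- Let `h(0) = 0` and `G(x,y) = h(x+y) - h(x) - h(y)` be continuous on `ℝ²`.
For coprime positive integers `p, n` with `p/n ∈ (0, 1/2)`:
`|h(p/n)| ≤ 2p|h(1)|/n + 2·ω(G; p/n; [0,1]²)`. -/
theorem stmt_6 (h : ℝ → ℝ) (h0 : h 0 = 0)
    (hG : Continuous (fun q : ℝ × ℝ => h (q.1 + q.2) - h q.1 - h q.2))
    (p n : ℕ) (hp : 0 < p) (hn : 0 < n) (hgcd : Nat.gcd p n = 1)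
    (hlt : (p : ℝ) / n < 1 / 2) :
    |h ((p : ℝ) / n)| ≤ 2 * (p : ℝ) * |h 1| / (n : ℝ)
      + 2 * omega2 (fun q : ℝ × ℝ => h (q.1 + q.2) - h q.1 - h q.2) ((p : ℝ) / n)
          (Set.Icc (0 : ℝ) 1 ×ˢ Set.Icc (0 : ℝ) 1) :=
  stmt_6_general h h0 hG p n hn hlt
end

section
/- Let α ∈ (0,1], M ≥ 1, and let g : ℝ → ℝ be a function such that the bivariate map F(x,y) = g(x+y) − g(x) − g(y) is Hölder continuous with exponent α on [−M,M]², i.e., there exists K ≥ 0 with |F(p) − F(q)| ≤ K·|p − q|^α for all p, q ∈ [−M,M]². Then there exist a function f : [−M,M] → ℝ that is Hölder continuous with exponent α on [−M,M] (there is K' ≥ 0 with |f(x) − f(y)| ≤ K'·|x − y|^α for all x, y ∈ [−M,M]) and a function A : [−M,M] → ℝ satisfying A(x+y) = A(x) + A(y) whenever x, y, x+y all lie in [−M,M], such that g(x) = f(x) + A(x) for all x ∈ [−M,M]. -/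
/-!
Write `B x y = g (x + y) - g x - g y`. It satisfies the cocycle identity
`B x y + B (x + y) z = B x (y + z) + B y z`, and it is continuous on the square, so
`f x = ∫₀ˣ B 1 w dw - ∫₀¹ B x t dt` makes sense on `[-M, M]`. Integrating the cocycle identity
over a unit window and comparing the two ways of shifting that window shows that `f` has the
same Cauchy difference `B` as `g` on the triangle `x, y, x + y ∈ [-M, M]`, so `g - f` is additive
there. The second term of `f` is `α`-Hölder because `B` is; the first is Lipschitz because
`B 1` is bounded, hence `α`-Hölder on a bounded interval.
-/

open MeasureTheory Set intervalIntegral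

theorem integral_comp_add_sub_comm {E : Type*} [NormedAddCommGroup E] [NormedSpace ℝ E]
    {ψ : ℝ → E} {x h : ℝ} (h0x : IntervalIntegrable ψ volume 0 x)
    (h0h : IntervalIntegrable ψ volume 0 h)
    (hshift : IntervalIntegrable (fun z => ψ (x + z)) volume 0 h) :
    ∫ z in 0..h, (ψ (x + z) - ψ z) = ∫ u in 0..x, (ψ (u + h) - ψ u) := by
  have hx : IntervalIntegrable ψ volume x (x + h) := by
    simpa using (IntervalIntegrable.comp_add_left_iff (c := x) (a := x) (b := x + h)).mp
      (by simpa using hshift)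
  have hh : IntervalIntegrable ψ volume h (x + h) := (h0h.symm.trans h0x).trans hx
  rw [integral_sub hshift h0h, integral_sub ((by simpa using hh.comp_add_right h)) h0x,
    integral_comp_add_left, integral_comp_add_right]
  simpa [add_comm] using integral_interval_sub_interval_comm' hx h0h h0x.symm

theorem le_rpow_mul_rpow_of_le {t D α : ℝ} (ht : 0 ≤ t) (htD : t ≤ D) (hα : α ≤ 1) :
    t ≤ D ^ (1 - α) * t ^ α := by
  calc t = t ^ (1 - α) * t ^ α := by
        rw [← Real.rpow_add' ht (by norm_num), sub_add_cancel, Real.rpow_one]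
    _ ≤ D ^ (1 - α) * t ^ α := by gcongr

theorem ContinuousOn.of_abs_sub_le_rpow {f : ℝ → ℝ} {s : Set ℝ} {K α : ℝ} (hα : 0 < α)
    (hf : ∀ x ∈ s, ∀ y ∈ s, |f x - f y| ≤ K * |x - y| ^ α) : ContinuousOn f s := by
  intro y hy
  rw [ContinuousWithinAt, tendsto_iff_dist_tendsto_zero]
  have hbound : Filter.Tendsto (fun x => K * |x - y| ^ α) (nhdsWithin y s) (nhds 0) := by
    have : Continuous (fun x => K * |x - y| ^ α) := by fun_prop (disch := positivity)
    simpa [Real.zero_rpow hα.ne'] using (this.tendsto y).mono_left nhdsWithin_le_nhds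
  refine squeeze_zero' (Filter.Eventually.of_forall fun _ => dist_nonneg) ?_ hbound
  filter_upwards [self_mem_nhdsWithin] with x hx using hf x hx y hy

theorem ContinuousOn.intervalIntegrable_of_mem_Icc {f : ℝ → ℝ} {a b u v : ℝ}
    (hf : ContinuousOn f (Icc a b)) (hu : u ∈ Icc a b) (hv : v ∈ Icc a b) :
    IntervalIntegrable f volume u v :=
  (hf.mono (uIcc_subset_Icc hu hv)).intervalIntegrable

theorem ContinuousOn.exists_abs_integral_sub_le {f : ℝ → ℝ} {a b c : ℝ}
    (hf : ContinuousOn f (Icc a b)) (hc : c ∈ Icc a b) :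
    ∃ C, 0 ≤ C ∧ ∀ x ∈ Icc a b, ∀ y ∈ Icc a b,
      |(∫ t in c..x, f t) - ∫ t in c..y, f t| ≤ C * |x - y| := by
  obtain ⟨C, hC⟩ := isCompact_Icc.exists_bound_of_continuousOn hf
  refine ⟨max C 0, le_max_right _ _, fun x hx y hy => ?_⟩
  rw [integral_interval_sub_left (hf.intervalIntegrable_of_mem_Icc hc hx)
    (hf.intervalIntegrable_of_mem_Icc hc hy)]
  refine norm_integral_le_of_norm_le_const fun t ht => (hC t ?_).trans (le_max_left _ _)
  exact uIcc_subset_Icc hy hx (uIoc_subset_uIcc ht)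

def cauchyDiff (g : ℝ → ℝ) (x y : ℝ) : ℝ := g (x + y) - g x - g y

theorem cauchyDiff_comm (g : ℝ → ℝ) (x y : ℝ) : cauchyDiff g x y = cauchyDiff g y x := by
  unfold cauchyDiff; ring_nf

theorem cauchyDiff_sub (g f : ℝ → ℝ) (x y : ℝ) :
    cauchyDiff (g - f) x y = cauchyDiff g x y - cauchyDiff f x y := by
  simp only [cauchyDiff, Pi.sub_apply]; ring

noncomputable def regularPart (g : ℝ → ℝ) (x : ℝ) : ℝ :=
  (∫ w in 0..x, cauchyDiff g 1 w) - ∫ t in 0..1, cauchyDiff g x t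

section
variable {g : ℝ → ℝ} {M K α : ℝ}

theorem cauchyDiff_regularPart (hM : 1 ≤ M)
    (hcont : ∀ x ∈ Icc (-M) M, ContinuousOn (cauchyDiff g x) (Icc (-M) M))
    {x y : ℝ} (hx : x ∈ Icc (-M) M) (hy : y ∈ Icc (-M) M) (hxy : x + y ∈ Icc (-M) M) :
    cauchyDiff (regularPart g) x y = cauchyDiff g x y := by
  have h0 : (0 : ℝ) ∈ Icc (-M) M := ⟨by linarith, by linarith⟩
  have h1 : (1 : ℝ) ∈ Icc (-M) M := ⟨by linarith, hM⟩
  have hInt : ∀ a ∈ Icc (-M) M, ∀ u ∈ Icc (-M) M, ∀ v ∈ Icc (-M) M,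
      IntervalIntegrable (cauchyDiff g a) volume u v := fun a ha u hu v hv =>
    (hcont a ha).intervalIntegrable_of_mem_Icc hu hv
  -- `cauchyDiff g y (x + z)` may leave the square, but the cocycle identity brings it back
  have hshifted : ∀ z, cauchyDiff g y (x + z) =
      cauchyDiff g (x + y) z - cauchyDiff g x z + cauchyDiff g x y := by
    intro z; unfold cauchyDiff; ring_nf
  have hstep : (fun u => cauchyDiff g y (u + 1) - cauchyDiff g y u) =
      fun u => cauchyDiff g 1 (u + y) - cauchyDiff g 1 u := by
    funext u; unfold cauchyDiff; ring_nf
  have hxy0 := hInt _ hxy 0 h0 1 h1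
  have hx0 := hInt x hx 0 h0 1 h1
  have hy0 := hInt y hy 0 h0 1 h1
  have hy1 : IntervalIntegrable (fun u => cauchyDiff g 1 (u + y)) volume 0 x := by
    simpa using (hInt 1 h1 y hy _ hxy).comp_add_right y
  have hshift := integral_comp_add_sub_comm (hInt y hy 0 h0 x hx) hy0
    (by simp only [hshifted]; exact (hxy0.sub hx0).add intervalIntegrable_const)
  simp only [hshifted] at hshift
  rw [integral_sub ((hxy0.sub hx0).add intervalIntegrable_const) hy0,
    integral_add (hxy0.sub hx0) intervalIntegrable_const, integral_sub hxy0 hx0,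
    intervalIntegral.integral_const, hstep, integral_sub hy1 (hInt 1 h1 0 h0 x hx),
    integral_comp_add_right] at hshift
  have hΦ := integral_interval_sub_left (hInt 1 h1 0 h0 _ hxy) (hInt 1 h1 0 h0 y hy)
  have hdef : cauchyDiff (regularPart g) x y =
      regularPart g (x + y) - regularPart g x - regularPart g y := rfl
  rw [hdef]
  simp only [regularPart, smul_eq_mul, sub_zero, one_mul, zero_add] at hshift hΦ ⊢
  linarith

theorem continuousOn_cauchyDiff (hα : 0 < α)
    (hB : ∀ x ∈ Icc (-M) M, ∀ y ∈ Icc (-M) M, ∀ z ∈ Icc (-M) M,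
      |cauchyDiff g x z - cauchyDiff g y z| ≤ K * |x - y| ^ α)
    {z : ℝ} (hz : z ∈ Icc (-M) M) : ContinuousOn (cauchyDiff g z) (Icc (-M) M) :=
  ContinuousOn.of_abs_sub_le_rpow hα fun x hx y hy => by
    simpa only [cauchyDiff_comm g z] using hB x hx y hy z hz

theorem exists_abs_regularPart_sub_le (hα0 : 0 < α) (hα1 : α ≤ 1) (hM : 1 ≤ M) (hK : 0 ≤ K)
    (hB : ∀ x ∈ Icc (-M) M, ∀ y ∈ Icc (-M) M, ∀ z ∈ Icc (-M) M,
      |cauchyDiff g x z - cauchyDiff g y z| ≤ K * |x - y| ^ α) :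
    ∃ K', 0 ≤ K' ∧ ∀ x ∈ Icc (-M) M, ∀ y ∈ Icc (-M) M,
      |regularPart g x - regularPart g y| ≤ K' * |x - y| ^ α := by
  have h0 : (0 : ℝ) ∈ Icc (-M) M := ⟨by linarith, by linarith⟩
  have h1 : (1 : ℝ) ∈ Icc (-M) M := ⟨by linarith, hM⟩
  have hunit : Icc (0 : ℝ) 1 ⊆ Icc (-M) M := Icc_subset_Icc (by linarith) hM
  obtain ⟨C, hC0, hC⟩ := (continuousOn_cauchyDiff hα0 hB h1).exists_abs_integral_sub_le h0
  refine ⟨C * (2 * M) ^ (1 - α) + K, by positivity, fun x hx y hy => ?_⟩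
  have hΦ : C * |x - y| ≤ C * (2 * M) ^ (1 - α) * |x - y| ^ α := by
    rw [mul_assoc]
    gcongr
    refine le_rpow_mul_rpow_of_le (abs_nonneg _) ?_ hα1
    rw [abs_le]
    constructor <;> linarith [hx.1, hx.2, hy.1, hy.2]
  have hβ : |(∫ t in 0..1, cauchyDiff g x t) - ∫ t in 0..1, cauchyDiff g y t| ≤
      K * |x - y| ^ α := by
    rw [← integral_sub ((continuousOn_cauchyDiff hα0 hB hx).intervalIntegrable_of_mem_Icc h0 h1)
      ((continuousOn_cauchyDiff hα0 hB hy).intervalIntegrable_of_mem_Icc h0 h1)]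
    simpa using norm_integral_le_of_norm_le_const (a := 0) (b := 1)
      (f := fun t => cauchyDiff g x t - cauchyDiff g y t) fun t ht =>
      hB x hx y hy t (hunit (by simpa using Ioc_subset_Icc_self ht))
  calc |regularPart g x - regularPart g y|
      ≤ |(∫ w in 0..x, cauchyDiff g 1 w) - ∫ w in 0..y, cauchyDiff g 1 w|
        + |(∫ t in 0..1, cauchyDiff g x t) - ∫ t in 0..1, cauchyDiff g y t| := by
        unfold regularPart
        rw [show ∀ a b c d : ℝ, a - b - (c - d) = (a - c) - (b - d) by intros; ring]
        exact abs_sub _ _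
    _ ≤ (C * (2 * M) ^ (1 - α) + K) * |x - y| ^ α := by
        linarith [hC x hx y hy]
end

/-- Let `α ∈ (0,1]`, `M ≥ 1`, and suppose `F(x,y) = g(x+y) - g(x) - g(y)` is
Hölder continuous with exponent `α` on `[-M,M]²` (Euclidean norm). Then on
`[-M,M]` one can write `g = f + A` where `f` is Hölder continuous with
exponent `α` on `[-M,M]` and `A` satisfies `A(x+y) = A(x) + A(y)` whenever
`x, y, x+y ∈ [-M,M]`. -/
theorem stmt_10 (α M : ℝ) (hα0 : 0 < α) (hα1 : α ≤ 1) (hM : 1 ≤ M)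
    (g : ℝ → ℝ)
    (hF : ∃ K : ℝ, 0 ≤ K ∧
      ∀ p ∈ Set.Icc (-M) M ×ˢ Set.Icc (-M) M,
      ∀ q ∈ Set.Icc (-M) M ×ˢ Set.Icc (-M) M,
        |(g (p.1 + p.2) - g p.1 - g p.2) - (g (q.1 + q.2) - g q.1 - g q.2)|
          ≤ K * (Real.sqrt ((p.1 - q.1) ^ 2 + (p.2 - q.2) ^ 2)) ^ α) :
    ∃ f A : ℝ → ℝ,
      (∃ K' : ℝ, 0 ≤ K' ∧ ∀ x ∈ Set.Icc (-M) M, ∀ y ∈ Set.Icc (-M) M,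
        |f x - f y| ≤ K' * |x - y| ^ α) ∧
      (∀ x y : ℝ, x ∈ Set.Icc (-M) M → y ∈ Set.Icc (-M) M →
        x + y ∈ Set.Icc (-M) M → A (x + y) = A x + A y) ∧
      (∀ x ∈ Set.Icc (-M) M, g x = f x + A x) := by
  obtain ⟨K, hK0, hK⟩ := hF
  have hB : ∀ x ∈ Icc (-M) M, ∀ y ∈ Icc (-M) M, ∀ z ∈ Icc (-M) M,
      |cauchyDiff g x z - cauchyDiff g y z| ≤ K * |x - y| ^ α := fun x hx y hy z hz => by
    simpa [cauchyDiff, Real.sqrt_sq_eq_abs] using hK (x, z) ⟨hx, hz⟩ (y, z) ⟨hy, hz⟩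
  refine ⟨regularPart g, g - regularPart g, exists_abs_regularPart_sub_le hα0 hα1 hM hK0 hB,
    fun x y hx hy hxy => ?_, fun x _ => by simp⟩
  have hA := cauchyDiff_sub g (regularPart g) x y
  rw [cauchyDiff_regularPart hM (fun z hz => continuousOn_cauchyDiff hα0 hB hz) hx hy hxy,
    sub_self] at hA
  unfold cauchyDiff at hA
  linarith
end
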